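/- arXiv:2009.12242 — 2 statements merged into one kernel-verified Lean document; each statement's English description precedes it below -/
import Mathlib

section
/- Let α ∈ (0,1], n ∈ ℕ, μ, ν, c ∈ ℝ with c not a nonpositive integer. Then for x > 0 with |x^α| < 1, D^{nα}[ x^{α(μ+n−1)} ₂F₁(μ, ν; c; x^α) ] = α^n (μ)_n x^{α(μ−1)} ₂F₁(μ+n, ν; c; x^α). -/
/-!
On `0 < y < 1` the function is a generalized power series `∑ b_k y^{α(s+k)}`, with `s = μ+n-1`
and `b_k` the Gauss coefficients; since `b_{k+1}/b_k → 1`, it may be differentiated termwise.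
As `D^α y^{α(s+k)} = α (s+k) y^{α(s-1+k)}`, the `n`-fold derivative multiplies the `k`-th term by
`α^n (s+k)(s+k-1)⋯(s+k-n+1) = α^n (μ+k)_n`, and `(μ+k)_n (μ)_k = (μ)_{n+k} = (μ)_n (μ+n)_k`
turns the result into `α^n (μ)_n y^{α(μ-1)} ₂F₁(μ+n, ν; c; y^α)`.
-/

open scoped Real BigOperators

noncomputable def poch (b : ℝ) (n : ℕ) : ℝ := (ascPochhammer ℝ n).eval b

noncomputable def F21 (μ ν c z : ℝ) : ℝ :=
  ∑' n : ℕ, poch μ n * poch ν n / (poch c n * (n.factorial : ℝ)) * z ^ n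

noncomputable def confD (α : ℝ) (f : ℝ → ℝ) : ℝ → ℝ :=
  fun x => x ^ (1 - α) * deriv f x

noncomputable def theta (α : ℝ) (f : ℝ → ℝ) : ℝ → ℝ :=
  fun x => (1 / α) * x ^ α * confD α f x

open Filter Set Asymptotics

def SummableBelowOne (b : ℕ → ℝ) : Prop :=
  ∀ r : ℝ, 0 ≤ r → r < 1 → Summable fun k => b k * r ^ k

lemma SummableBelowOne.affine_mul {b : ℕ → ℝ} (hb : SummableBelowOne b) (a t : ℝ) :
    SummableBelowOne fun k => a * (t + k) * b k := by
  intro r hr0 hr1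
  obtain ⟨r', hrr', hr'1⟩ := exists_between hr1
  have hr'0 : 0 < r' := hr0.trans_lt hrr'
  set q := r / r'
  have hq0 : 0 ≤ q := div_nonneg hr0 hr'0.le
  have hq1 : q < 1 := (div_lt_one hr'0).2 hrr'
  have hdecay : Tendsto (fun k : ℕ => a * (t + k) * q ^ k) atTop (nhds 0) := by
    have h := ((tendsto_pow_atTop_nhds_zero_of_lt_one hq0 hq1).const_mul (a * t)).add
      ((tendsto_self_mul_const_pow_of_lt_one hq0 hq1).const_mul a)
    simp only [mul_zero, add_zero] at h
    exact h.congr fun k => by ring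
  refine summable_of_isBigO_nat' (hb r' hr'0.le hr'1) ?_
  have h := hdecay.isBigO_one ℝ |>.mul (isBigO_refl (fun k => b k * r' ^ k) atTop)
  refine (h.congr_left fun k => ?_).congr_right fun k => one_mul _
  rw [show r = q * r' from (div_mul_cancel₀ r hr'0.ne').symm]
  ring

lemma summableBelowOne_of_ratio {b u : ℕ → ℝ} (hrec : ∀ k, b (k + 1) = b k * u k)
    (hu : Tendsto (fun k => |u k|) atTop (nhds 1)) : SummableBelowOne b := by
  intro r hr0 hr1
  obtain ⟨r', hrr', hr'1⟩ := exists_between hr1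
  have hev : ∀ᶠ k in atTop, |u k| * r ≤ r' := by
    refine (hu.mul_const r).eventually_le_const ?_
    simpa using hrr'
  refine summable_of_ratio_norm_eventually_le hr'1 ?_
  filter_upwards [hev] with k hk
  rw [Real.norm_eq_abs, Real.norm_eq_abs, hrec, pow_succ,
    show b k * u k * (r ^ k * r) = (u k * r) * (b k * r ^ k) by ring, abs_mul, abs_mul,
    abs_of_nonneg hr0]
  exact mul_le_mul_of_nonneg_right hk (abs_nonneg _)

noncomputable def rpowSeries (α s : ℝ) (b : ℕ → ℝ) (y : ℝ) : ℝ :=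
  ∑' k : ℕ, b k * y ^ (α * (s + k))

lemma rpow_mul_rpow_pow {α y : ℝ} (hy : 0 < y) (s : ℝ) (k : ℕ) :
    y ^ (α * s) * (y ^ α) ^ k = y ^ (α * (s + k)) := by
  rw [mul_add, Real.rpow_add hy, Real.rpow_mul hy.le, Real.rpow_mul hy.le, Real.rpow_natCast]

lemma rpow_mul_tsum_eq_rpowSeries {α y : ℝ} (hy : 0 < y) (s : ℝ) (b : ℕ → ℝ) :
    y ^ (α * s) * ∑' k : ℕ, b k * (y ^ α) ^ k = rpowSeries α s b y := by
  rw [rpowSeries, ← tsum_mul_left]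
  exact tsum_congr fun k => by rw [← rpow_mul_rpow_pow hy]; ring

lemma rpowSeries_const_mul (α s a : ℝ) (b : ℕ → ℝ) (y : ℝ) :
    rpowSeries α s (fun k => a * b k) y = a * rpowSeries α s b y := by
  rw [rpowSeries, rpowSeries, ← tsum_mul_left]
  exact tsum_congr fun k => mul_assoc _ _ _

lemma summable_rpowSeries {α : ℝ} (hα : 0 < α) {b : ℕ → ℝ} (hb : SummableBelowOne b) (s : ℝ)
    {y : ℝ} (hy : y ∈ Ioo (0 : ℝ) 1) : Summable fun k : ℕ => b k * y ^ (α * (s + k)) := by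
  have h := (hb (y ^ α) (Real.rpow_nonneg hy.1.le α) (Real.rpow_lt_one hy.1.le hy.2 hα)).mul_left
    (y ^ (α * s))
  exact h.congr fun k => by rw [← rpow_mul_rpow_pow hy.1]; ring

lemma hasDerivAt_rpowSeries {α : ℝ} (hα : 0 < α) {b : ℕ → ℝ} (hb : SummableBelowOne b) (s : ℝ)
    {x : ℝ} (hx : x ∈ Ioo (0 : ℝ) 1) :
    HasDerivAt (rpowSeries α s b)
      (∑' k : ℕ, α * (s + k) * b k * x ^ (α * (s + k) - 1)) x := by
  obtain ⟨z, hxz, hz1⟩ := exists_between hx.2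
  have hx2 : 0 < x / 2 := half_pos hx.1
  have hρ0 : 0 ≤ z ^ α := Real.rpow_nonneg (hx.1.trans hxz).le α
  have hρ1 : z ^ α < 1 := Real.rpow_lt_one (hx.1.trans hxz).le hz1 hα
  set M := max ((x / 2) ^ (α * s - 1)) (z ^ (α * s - 1))
  have hu := ((hb.affine_mul α s) _ hρ0 hρ1).abs.mul_right M
  have hxt : x ∈ Ioo (x / 2) z := ⟨by linarith [hx.1], hxz⟩
  refine hasDerivAt_tsum_of_isPreconnected hu isOpen_Ioo isPreconnected_Ioo
    (g := fun k y => b k * y ^ (α * (s + k)))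
    (g' := fun k y => α * (s + k) * b k * y ^ (α * (s + k) - 1))
    (fun k y hy => ?_) (fun k y hy => ?_) hxt (summable_rpowSeries hα hb s hx) hxt
  · have hy0 : 0 < y := hx2.trans hy.1
    simpa [mul_comm, mul_left_comm, mul_assoc] using
      (Real.hasDerivAt_rpow_const (p := α * (s + k)) (Or.inl hy0.ne')).const_mul (b k)
  · have hy0 : 0 < y := hx2.trans hy.1
    have hyM : y ^ (α * s - 1) ≤ M := by
      rcases le_or_gt 0 (α * s - 1) with h | h
      · exact (Real.rpow_le_rpow hy0.le hy.2.le h).trans (le_max_right _ _)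
      · exact (Real.rpow_le_rpow_of_nonpos hx2 hy.1.le h.le).trans (le_max_left _ _)
    have hyρ : (y ^ α) ^ k ≤ (z ^ α) ^ k :=
      pow_le_pow_left₀ (Real.rpow_nonneg hy0.le α) (Real.rpow_le_rpow hy0.le hy.2.le hα.le) k
    have hsplit : y ^ (α * (s + k) - 1) = y ^ (α * s - 1) * (y ^ α) ^ k := by
      rw [show α * (s + k) - 1 = (α * s - 1) + α * k by ring, Real.rpow_add hy0,
        Real.rpow_mul hy0.le, Real.rpow_natCast]
    show |α * (s + k) * b k * _| ≤ |α * (s + k) * b k * (z ^ α) ^ k| * M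
    rw [hsplit, abs_mul (α * (s + k) * b k), abs_mul (α * (s + k) * b k),
      abs_of_nonneg (by positivity : (0 : ℝ) ≤ (z ^ α) ^ k),
      abs_of_nonneg (by positivity : 0 ≤ y ^ (α * s - 1) * (y ^ α) ^ k)]
    calc |α * (s + k) * b k| * (y ^ (α * s - 1) * (y ^ α) ^ k)
        ≤ |α * (s + k) * b k| * (M * (z ^ α) ^ k) := by gcongr
      _ = |α * (s + k) * b k| * (z ^ α) ^ k * M := by ring

lemma confD_congr {α : ℝ} {f g : ℝ → ℝ} {U : Set ℝ} (hU : IsOpen U) (h : EqOn f g U) :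
    EqOn (confD α f) (confD α g) U := fun x hx => by
  rw [confD, confD, (h.eventuallyEq_of_mem (hU.mem_nhds hx)).deriv_eq]

lemma iterate_confD_congr {α : ℝ} {f g : ℝ → ℝ} {U : Set ℝ} (hU : IsOpen U)
    (h : EqOn f g U) (n : ℕ) : EqOn ((confD α)^[n] f) ((confD α)^[n] g) U := by
  induction n with
  | zero => exact h
  | succ n ih =>
    rw [Function.iterate_succ_apply', Function.iterate_succ_apply']
    exact confD_congr hU ih

lemma confD_rpowSeries {α : ℝ} (hα : 0 < α) {b : ℕ → ℝ} (hb : SummableBelowOne b) (s : ℝ) :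
    EqOn (confD α (rpowSeries α s b))
      (rpowSeries α (s - 1) fun k => α * (s + k) * b k) (Ioo (0 : ℝ) 1) := fun x hx => by
  rw [confD, (hasDerivAt_rpowSeries hα hb s hx).deriv, rpowSeries, ← tsum_mul_left]
  refine tsum_congr fun k => ?_
  rw [show α * (s - 1 + k) = (1 - α) + (α * (s + k) - 1) by ring, Real.rpow_add hx.1]
  ring

lemma SummableBelowOne.descPochhammer_mul {b : ℕ → ℝ} (hb : SummableBelowOne b) (α s : ℝ)
    (n : ℕ) : SummableBelowOne fun k => α ^ n * (descPochhammer ℝ n).eval (s + k) * b k := by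
  induction n with
  | zero => simpa using hb
  | succ n ih =>
    refine fun r hr0 hr1 => (ih.affine_mul α (s - n) r hr0 hr1).congr fun k => ?_
    simp only [descPochhammer_succ_eval]
    ring

lemma iterate_confD_rpowSeries {α : ℝ} (hα : 0 < α) {b : ℕ → ℝ} (hb : SummableBelowOne b)
    (s : ℝ) (n : ℕ) :
    EqOn ((confD α)^[n] (rpowSeries α s b))
      (rpowSeries α (s - n) fun k => α ^ n * (descPochhammer ℝ n).eval (s + k) * b k)
      (Ioo (0 : ℝ) 1) := by
  induction n with
  | zero => intro x _; simp
  | succ n ih =>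
    intro x hx
    rw [Function.iterate_succ_apply', confD_congr isOpen_Ioo ih hx,
      confD_rpowSeries hα (hb.descPochhammer_mul α s n) _ hx]
    congr 1
    · push_cast; ring
    · ext k
      rw [descPochhammer_succ_eval]
      ring

noncomputable def hypCoeff (μ ν c : ℝ) (k : ℕ) : ℝ :=
  poch μ k * poch ν k / (poch c k * (k.factorial : ℝ))

lemma F21_eq_tsum_hypCoeff (μ ν c z : ℝ) :
    F21 μ ν c z = ∑' k : ℕ, hypCoeff μ ν c k * z ^ k := rfl

lemma poch_succ (b : ℝ) (k : ℕ) : poch b (k + 1) = poch b k * (b + k) :=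
  ascPochhammer_succ_eval k b

lemma poch_add (b : ℝ) (m k : ℕ) : poch b (m + k) = poch b m * poch (b + m) k := by
  simpa [poch, Polynomial.eval_comp] using
    (congrArg (Polynomial.eval b) (ascPochhammer_mul ℝ m k)).symm

-- If `c + k = 0`, both sides vanish because `x / 0 = 0`.
lemma hypCoeff_succ (μ ν c : ℝ) (k : ℕ) :
    hypCoeff μ ν c (k + 1) = hypCoeff μ ν c k * ((μ + k) / (c + k) * ((ν + k) / (1 + k))) := by
  rw [hypCoeff, hypCoeff, poch_succ, poch_succ, poch_succ, Nat.factorial_succ,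
    div_mul_div_comm, div_mul_div_comm]
  push_cast
  congr 1 <;> ring

lemma summableBelowOne_hypCoeff (μ ν c : ℝ) : SummableBelowOne (hypCoeff μ ν c) := by
  refine summableBelowOne_of_ratio (hypCoeff_succ μ ν c) ?_
  have h (a b : ℝ) : Tendsto (fun k : ℕ => (a + k) / (b + k)) atTop (nhds 1) := by
    simpa using tendsto_add_mul_div_add_mul_atTop_nhds a b (1 : ℝ) one_ne_zero
  simpa using ((h μ c).mul (h ν 1)).abs

lemma descPochhammer_mul_hypCoeff (μ ν c : ℝ) (n k : ℕ) :
    (descPochhammer ℝ n).eval (μ + n - 1 + k) * hypCoeff μ ν c k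
      = poch μ n * hypCoeff (μ + n) ν c k := by
  have hpoch : poch (μ + k) n * poch μ k = poch μ n * poch (μ + n) k := by
    rw [mul_comm, ← poch_add, add_comm k n, poch_add]
  rw [descPochhammer_eval_eq_ascPochhammer, hypCoeff, hypCoeff, mul_div_assoc', mul_div_assoc',
    show μ + n - 1 + k - n + 1 = μ + k by ring, ← mul_assoc, ← mul_assoc]
  exact congrArg (· * _ / _) hpoch

theorem stmt4_general (α : ℝ) (hα : α ∈ Set.Ioc (0:ℝ) 1) (n : ℕ) (μ ν c : ℝ)
    (x : ℝ) (hx : 0 < x) (hx1 : |x ^ α| < 1) :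
    (confD α)^[n] (fun y => y ^ (α * (μ + n - 1)) * F21 μ ν c (y ^ α)) x
      = α ^ n * poch μ n * x ^ (α * (μ - 1)) * F21 (μ + n) ν c (x ^ α) := by
  have hα0 : 0 < α := hα.1
  have hxI : x ∈ Ioo (0 : ℝ) 1 := ⟨hx, (Real.rpow_lt_one_iff' hx.le hα0).1 (lt_of_abs_lt hx1)⟩
  have hseries : EqOn (fun y => y ^ (α * (μ + n - 1)) * F21 μ ν c (y ^ α))
      (rpowSeries α (μ + n - 1) (hypCoeff μ ν c)) (Ioo (0 : ℝ) 1) :=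
    fun y hy => rpow_mul_tsum_eq_rpowSeries hy.1 _ _
  rw [iterate_confD_congr isOpen_Ioo hseries n hxI,
    iterate_confD_rpowSeries hα0 (summableBelowOne_hypCoeff μ ν c) _ n hxI, mul_assoc,
    F21_eq_tsum_hypCoeff, rpow_mul_tsum_eq_rpowSeries hx, ← rpowSeries_const_mul,
    show μ + n - 1 - n = μ - 1 by ring]
  congr 1
  ext k
  rw [mul_assoc, descPochhammer_mul_hypCoeff, mul_assoc]

theorem stmt4 (α : ℝ) (hα : α ∈ Set.Ioc (0:ℝ) 1) (n : ℕ) (μ ν c : ℝ)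
    (hc : ∀ k : ℕ, c ≠ -(k : ℝ)) (x : ℝ) (hx : 0 < x) (hx1 : |x ^ α| < 1) :
    (confD α)^[n] (fun y => y ^ (α * (μ + n - 1)) * F21 μ ν c (y ^ α)) x
      = α ^ n * poch μ n * x ^ (α * (μ - 1)) * F21 (μ + n) ν c (x ^ α) :=
  stmt4_general α hα n μ ν c x hx hx1
end

section
/- Let α ∈ (0,1] and μ, ν, c ∈ ℝ with μ ≠ 1, ν ≠ 1, c ≠ 1, and c, c−1 not nonpositive integers. For x > 0 with |x^α| < 1, the conformable fractional integral I_α f(x) = ∫_0^x t^{α−1} f(t) dt satisfies I_α[ ₂F₁(μ, ν; c; x^α) ] = ((c−1)/(α(μ−1)(ν−1))) · [ ₂F₁(μ−1, ν−1; c−1; x^α) − 1 ]. -/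
open scoped Real BigOperators

/-!
Expand `₂F₁(μ, ν; c; t^α)` into its power series in `t^α`. Since `|x^α| < 1` the series converges
absolutely, which dominates the termwise integrals, so integration and summation commute, and
`∫₀ˣ t^(α-1) (t^α)^n dt = (x^α)^(n+1) / (α (n+1))`. The contiguity relation
`(a-1)_(n+1) = (a-1) (a)_n` of Pochhammer symbols turns the `n`-th integrated coefficient into
`(c-1)/(α(μ-1)(ν-1))` times the `(n+1)`-st coefficient of `₂F₁(μ-1, ν-1; c-1; ·)`, so the integral
is that series without its constant term `1`.
-/

open MeasureTheory Set

section Hypergeometric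

variable {𝕂 : Type*}

theorem ordinaryHypergeometricCoefficient_zero [Field 𝕂] (a b c : 𝕂) :
    ordinaryHypergeometricCoefficient a b c 0 = 1 := by
  simp [ordinaryHypergeometricCoefficient]

theorem ascPochhammer_eval_sub_one_succ [CommRing 𝕂] (a : 𝕂) (n : ℕ) :
    (ascPochhammer 𝕂 (n + 1)).eval (a - 1) = (a - 1) * (ascPochhammer 𝕂 n).eval a := by
  simp [ascPochhammer_succ_left]

theorem ordinaryHypergeometricCoefficient_sub_one_succ [Field 𝕂] (a b c : 𝕂) (n : ℕ) :
    ordinaryHypergeometricCoefficient (a - 1) (b - 1) (c - 1) (n + 1)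
      = (a - 1) * (b - 1) / ((c - 1) * (n + 1)) * ordinaryHypergeometricCoefficient a b c n := by
  simp only [ordinaryHypergeometricCoefficient, ascPochhammer_eval_sub_one_succ,
    Nat.factorial_succ, Nat.cast_mul, Nat.cast_succ, div_eq_mul_inv, mul_inv]
  ring

theorem one_le_radius_ordinaryHypergeometricSeries [RCLike 𝕂] (a b c : 𝕂)
    (hc : ∀ k : ℕ, c ≠ -(k : 𝕂)) : 1 ≤ (ordinaryHypergeometricSeries 𝕂 a b c).radius := by
  by_cases ha : ∃ k : ℕ, a = -(k : 𝕂)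
  · obtain ⟨k, rfl⟩ := ha
    simp [ordinaryHypergeometric_radius_top_of_neg_nat₁]
  by_cases hb : ∃ k : ℕ, b = -(k : 𝕂)
  · obtain ⟨k, rfl⟩ := hb
    simp [ordinaryHypergeometric_radius_top_of_neg_nat₂]
  push Not at ha hb
  refine (ordinaryHypergeometricSeries_radius_eq_one 𝕂 a b c fun k => ?_).ge
  refine ⟨fun h => ha k ?_, fun h => hb k ?_, fun h => hc k ?_⟩ <;> rw [h, neg_neg]

theorem summable_norm_ordinaryHypergeometricCoefficient_mul_pow [RCLike 𝕂] (a b c : 𝕂)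
    (hc : ∀ k : ℕ, c ≠ -(k : 𝕂)) {z : 𝕂} (hz : ‖z‖ < 1) :
    Summable fun n => ‖ordinaryHypergeometricCoefficient a b c n * z ^ n‖ := by
  have hr : z ∈ Metric.eball 0 (ordinaryHypergeometricSeries 𝕂 a b c).radius := by
    rw [mem_eball_zero_iff, ← ofReal_norm]
    exact (ENNReal.ofReal_lt_one.2 hz).trans_le (one_le_radius_ordinaryHypergeometricSeries a b c hc)
  simpa only [ordinaryHypergeometricSeries_apply_eq, smul_eq_mul] using
    (ordinaryHypergeometricSeries 𝕂 a b c).summable_norm_apply hr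

end Hypergeometric

theorem F21_eq_tsum (μ ν c z : ℝ) :
    F21 μ ν c z = ∑' n, ordinaryHypergeometricCoefficient μ ν c n * z ^ n := by
  simp only [F21, poch]
  congr 1
  ext n
  ring

section ConformableIntegral

variable {α : ℝ}

theorem rpow_sub_one_mul_rpow_pow {t : ℝ} (ht : 0 < t) (n : ℕ) :
    t ^ (α - 1) * (t ^ α) ^ n = t ^ (α * (n + 1) - 1) := by
  rw [← Real.rpow_mul_natCast ht.le, ← Real.rpow_add ht]
  ring_nf

theorem integrableOn_rpow_sub_one_mul_rpow_pow (hα : 0 < α) (x : ℝ) (n : ℕ) :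
    IntegrableOn (fun t => t ^ (α - 1) * (t ^ α) ^ n) (Ioc 0 x) := by
  have hexp : -1 < α * (n + 1) - 1 := by nlinarith [(n.cast_nonneg : (0 : ℝ) ≤ n)]
  exact (intervalIntegral.intervalIntegrable_rpow' hexp (a := 0) (b := x)).1.congr_fun
    (fun t ht => (rpow_sub_one_mul_rpow_pow ht.1 n).symm) measurableSet_Ioc

theorem integral_rpow_sub_one_mul_rpow_pow (hα : 0 < α) {x : ℝ} (hx : 0 ≤ x) (n : ℕ) :
    ∫ t in Ioc 0 x, t ^ (α - 1) * (t ^ α) ^ n = (x ^ α) ^ (n + 1) / (α * (n + 1)) := by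
  have hexp : -1 < α * (n + 1) - 1 := by nlinarith [(n.cast_nonneg : (0 : ℝ) ≤ n)]
  rw [setIntegral_congr_fun measurableSet_Ioc fun t ht => rpow_sub_one_mul_rpow_pow ht.1 n,
    ← intervalIntegral.integral_of_le hx, integral_rpow (Or.inl hexp), sub_add_cancel,
    Real.zero_rpow (by positivity), sub_zero, ← Real.rpow_mul_natCast hx]
  push_cast
  rfl

theorem intervalIntegral_rpow_sub_one_mul_tsum (hα : 0 < α) {x : ℝ} (hx : 0 ≤ x) {a : ℕ → ℝ}
    (ha : Summable fun n => ‖a n * (x ^ α) ^ n‖) :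
    ∫ t in 0..x, t ^ (α - 1) * ∑' n, a n * (t ^ α) ^ n
      = ∑' n, a n * ((x ^ α) ^ (n + 1) / (α * (n + 1))) := by
  have hint n : IntegrableOn (fun t => a n * (t ^ (α - 1) * (t ^ α) ^ n)) (Ioc 0 x) :=
    (integrableOn_rpow_sub_one_mul_rpow_pow hα x n).const_mul (a n)
  have hnorm n : ∫ t in Ioc 0 x, ‖a n * (t ^ (α - 1) * (t ^ α) ^ n)‖
      = |a n| * ((x ^ α) ^ (n + 1) / (α * (n + 1))) := by
    rw [← integral_rpow_sub_one_mul_rpow_pow hα hx n, ← integral_const_mul]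
    refine setIntegral_congr_fun measurableSet_Ioc fun t ht => ?_
    rw [norm_mul, Real.norm_eq_abs, Real.norm_of_nonneg
      (mul_nonneg (Real.rpow_nonneg ht.1.le _) (pow_nonneg (Real.rpow_nonneg ht.1.le _) _))]
  have hsum : Summable fun n => |a n| * ((x ^ α) ^ (n + 1) / (α * (n + 1))) := by
    refine .of_nonneg_of_le (fun n => by positivity) (fun n => ?_) (ha.mul_left (x ^ α / α))
    have : α ≤ α * (n + 1) := by nlinarith [(n.cast_nonneg : (0 : ℝ) ≤ n)]
    calc |a n| * ((x ^ α) ^ (n + 1) / (α * (n + 1)))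
        ≤ |a n| * ((x ^ α) ^ (n + 1) / α) := by gcongr
      _ = x ^ α / α * ‖a n * (x ^ α) ^ n‖ := by
        rw [norm_mul, norm_pow, Real.norm_eq_abs, Real.norm_eq_abs,
          abs_of_nonneg (Real.rpow_nonneg hx α), pow_succ]
        ring
  rw [intervalIntegral.integral_of_le hx]
  simp_rw [← tsum_mul_left, mul_left_comm _ (a _)]
  rw [← integral_tsum_of_summable_integral_norm hint (by simpa only [hnorm] using hsum)]
  refine tsum_congr fun n => ?_
  rw [integral_const_mul, integral_rpow_sub_one_mul_rpow_pow hα hx n]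

end ConformableIntegral

theorem stmt15_general (α : ℝ) (hα : α ∈ Set.Ioc (0:ℝ) 1) (μ ν c : ℝ)
    (hμ : μ ≠ 1) (hν : ν ≠ 1) (hc1 : c ≠ 1)
    (hc : ∀ k : ℕ, c ≠ -(k : ℝ))
    (x : ℝ) (hx : 0 < x) (hx1 : |x ^ α| < 1) :
    ∫ t in (0:ℝ)..x, t ^ (α - 1) * F21 μ ν c (t ^ α)
      = ((c - 1) / (α * (μ - 1) * (ν - 1)))
        * (F21 (μ - 1) (ν - 1) (c - 1) (x ^ α) - 1) := by
  have hc' : ∀ k : ℕ, c - 1 ≠ -(k : ℝ) := by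
    rintro (_ | k) h
    · exact hc1 (by simpa [sub_eq_zero] using h)
    · exact hc k (by push_cast at h; linarith)
  have hα0 : α ≠ 0 := hα.1.ne'
  have hμ1 : μ - 1 ≠ 0 := sub_ne_zero.2 hμ
  have hν1 : ν - 1 ≠ 0 := sub_ne_zero.2 hν
  have hc1' : c - 1 ≠ 0 := sub_ne_zero.2 hc1
  simp only [F21_eq_tsum]
  rw [intervalIntegral_rpow_sub_one_mul_tsum hα.1 hx.le
      (summable_norm_ordinaryHypergeometricCoefficient_mul_pow μ ν c hc hx1),
    (summable_norm_ordinaryHypergeometricCoefficient_mul_pow _ _ _ hc' hx1).of_norm.tsum_eq_zero_add,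
    ordinaryHypergeometricCoefficient_zero, pow_zero, one_mul, add_sub_cancel_left,
    ← tsum_mul_left]
  refine tsum_congr fun n => ?_
  rw [ordinaryHypergeometricCoefficient_sub_one_succ]
  field_simp

theorem stmt15 (α : ℝ) (hα : α ∈ Set.Ioc (0:ℝ) 1) (μ ν c : ℝ)
    (hμ : μ ≠ 1) (hν : ν ≠ 1) (hc1 : c ≠ 1)
    (hc : ∀ k : ℕ, c ≠ -(k : ℝ)) (hc' : ∀ k : ℕ, c - 1 ≠ -(k : ℝ))
    (x : ℝ) (hx : 0 < x) (hx1 : |x ^ α| < 1) :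
    ∫ t in (0:ℝ)..x, t ^ (α - 1) * F21 μ ν c (t ^ α)
      = ((c - 1) / (α * (μ - 1) * (ν - 1)))
        * (F21 (μ - 1) (ν - 1) (c - 1) (x ^ α) - 1) :=
  stmt15_general α hα μ ν c hμ hν hc1 hc x hx hx1
end
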